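/- arXiv:2401.12394 — 2 statements merged into one kernel-verified Lean document; each statement's English description precedes it below -/
import Mathlib

section
/- Let n ≥ 1 and let ζ = exp(2πi/n) ∈ ℂ. For t, s ∈ ℂ with |t| = |s| = 1 and every m ≥ 1, the m-th derivatives of f_t and f_s are equal as polynomials: derivative^[m] f_t = derivative^[m] f_s. That is, the derivative (and all higher derivatives) of f_t do not change when the regular n-gon is rotated about its center. -/
open Polynomial Finset

/-! With `J z = z + z⁻¹`, the real part of a unit complex number `v` is `J v / 2`.
The factorisation `J w - J v = w⁻¹ (w - v) (w - v⁻¹)` together with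
`∏ₖ (w - ζᵏ u) = wⁿ - uⁿ` gives `∏ₖ (J w - J (ζᵏ u)) = J (wⁿ) - J (uⁿ)`.
Every `x` is `J w / 2` for some `w`, so `2ⁿ f_u(x) = J (wⁿ) - 2 Re (uⁿ)`:
the polynomials `f_t` and `f_s` differ by a constant. -/

def joukowski {K : Type*} [Field K] (z : K) : K := z + z⁻¹

lemma IsPrimitiveRoot.prod_range_sub_pow_mul {R : Type*} [CommRing R] [IsDomain R]
    {n : ℕ} {ζ : R} (hζ : IsPrimitiveRoot ζ n) (hn : 0 < n) (w u : R) :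
    ∏ k ∈ range n, (w - ζ ^ k * u) = w ^ n - u ^ n := by
  simpa [eval_prod] using congrArg (eval w) (X_pow_sub_C_eq_prod hζ hn (rfl : u ^ n = u ^ n)).symm

section Field

variable {K : Type*} [Field K]

lemma joukowski_sub_joukowski {w v : K} (hw : w ≠ 0) (hv : v ≠ 0) :
    joukowski w - joukowski v = w⁻¹ * ((w - v) * (w - v⁻¹)) := by
  unfold joukowski
  field_simp
  ring

lemma IsPrimitiveRoot.prod_range_joukowski_sub {n : ℕ} {ζ : K} (hζ : IsPrimitiveRoot ζ n)
    (hn : 0 < n) {w u : K} (hw : w ≠ 0) (hu : u ≠ 0) :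
    ∏ k ∈ range n, (joukowski w - joukowski (ζ ^ k * u))
      = joukowski (w ^ n) - joukowski (u ^ n) := by
  have hζ0 : ζ ≠ 0 := hζ.ne_zero hn.ne'
  have factor (k : ℕ) : joukowski w - joukowski (ζ ^ k * u)
      = w⁻¹ * ((w - ζ ^ k * u) * (w - ζ⁻¹ ^ k * u⁻¹)) := by
    rw [joukowski_sub_joukowski hw (by positivity), mul_inv, inv_pow]
  simp only [factor, prod_mul_distrib, prod_const, card_range, hζ.prod_range_sub_pow_mul hn,
    hζ.inv.prod_range_sub_pow_mul hn]
  simp only [joukowski, inv_pow]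
  field_simp
  ring

lemma IsAlgClosed.exists_joukowski_eq [IsAlgClosed K] (x : K) : ∃ w ≠ 0, joukowski w = x := by
  obtain ⟨w, hw⟩ := IsAlgClosed.exists_root (X ^ 2 - C x * X + 1 : K[X])
    (by rw [show (X ^ 2 - C x * X + 1 : K[X]).degree = 2 by compute_degree!]; decide)
  simp only [IsRoot, eval_add, eval_sub, eval_pow, eval_mul, eval_X, eval_C, eval_one] at hw
  have hw0 : w ≠ 0 := by rintro rfl; simp at hw
  refine ⟨w, hw0, ?_⟩
  unfold joukowski
  field_simp
  linear_combination hw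

end Field

lemma Complex.joukowski_eq_two_mul_re {z : ℂ} (hz : ‖z‖ = 1) : joukowski z = 2 * z.re := by
  rw [joukowski, inv_eq_conj hz, add_conj]
  push_cast
  ring

lemma two_pow_mul_eval_prod_X_sub_C_re {n : ℕ} {ζ : ℂ} (hζ : IsPrimitiveRoot ζ n)
    (hn : 0 < n) {u : ℂ} (hu : ‖u‖ = 1) (x : ℝ) {w : ℂ} (hw : w ≠ 0)
    (hwx : joukowski w = 2 * x) :
    ((2 ^ n * (∏ k ∈ range n, (X - C (u * ζ ^ k).re)).eval x : ℝ) : ℂ)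
      = joukowski (w ^ n) - 2 * (u ^ n).re := by
  have hζu (k : ℕ) : ‖ζ ^ k * u‖ = 1 := by simp [hζ.norm'_eq_one hn.ne', hu]
  have factor (k : ℕ) :
      2 * ((x : ℂ) - (u * ζ ^ k).re) = joukowski w - joukowski (ζ ^ k * u) := by
    rw [hwx, Complex.joukowski_eq_two_mul_re (hζu k), mul_comm u]
    ring
  have hu0 : u ≠ 0 := by rintro rfl; simp at hu
  push_cast
  rw [eval_prod, Complex.ofReal_prod, show (2 : ℂ) ^ n = 2 ^ #(range n) by rw [card_range],
    pow_card_mul_prod]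
  simp only [eval_sub, eval_X, eval_C, Complex.ofReal_sub, factor]
  rw [hζ.prod_range_joukowski_sub hn hw hu0,
    Complex.joukowski_eq_two_mul_re (z := u ^ n) (by simp [hu])]

theorem prod_X_sub_C_re_eq_add_C {n : ℕ} {ζ : ℂ} (hζ : IsPrimitiveRoot ζ n) (hn : 0 < n)
    {t s : ℂ} (ht : ‖t‖ = 1) (hs : ‖s‖ = 1) :
    ∏ k ∈ range n, (X - C (t * ζ ^ k).re)
      = ∏ k ∈ range n, (X - C (s * ζ ^ k).re) + C (2 * ((s ^ n).re - (t ^ n).re) / 2 ^ n) := by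
  refine Polynomial.funext fun x ↦ ?_
  obtain ⟨w, hw, hwx⟩ := IsAlgClosed.exists_joukowski_eq (2 * x : ℂ)
  have hft := two_pow_mul_eval_prod_X_sub_C_re hζ hn ht x hw hwx
  have hfs := two_pow_mul_eval_prod_X_sub_C_re hζ hn hs x hw hwx
  have key : 2 ^ n * (∏ k ∈ range n, (X - C (t * ζ ^ k).re)).eval x
      = 2 ^ n * (∏ k ∈ range n, (X - C (s * ζ ^ k).re)).eval x
        + 2 * ((s ^ n).re - (t ^ n).re) := by
    refine Complex.ofReal_injective ?_
    push_cast at hft hfs ⊢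
    linear_combination hft - hfs
  rw [eval_add, eval_C]
  field_simp
  linear_combination key

/-- All derivatives of `f_t` are unchanged when the regular `n`-gon is rotated
about its center. -/
theorem derivative_rotation_invariant (n : ℕ) (hn : 1 ≤ n)
    (ζ : ℂ) (hζ : ζ = Complex.exp (2 * Real.pi * Complex.I / n))
    (t s : ℂ) (ht : ‖t‖ = 1) (hs : ‖s‖ = 1)
    (m : ℕ) (hm : 1 ≤ m) :
    (derivative^[m] (∏ k ∈ Finset.range n, (X - C (Complex.re (t * ζ ^ k))))) =
      (derivative^[m] (∏ k ∈ Finset.range n, (X - C (Complex.re (s * ζ ^ k))))) := by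
  have hprim : IsPrimitiveRoot ζ n := hζ ▸ Complex.isPrimitiveRoot_exp n (by omega)
  obtain ⟨m, rfl⟩ := Nat.exists_eq_add_of_le' hm
  rw [Function.iterate_succ_apply, Function.iterate_succ_apply,
    prod_X_sub_C_re_eq_add_C hprim hn ht hs, derivative_add, derivative_C, add_zero]
end

section
/- Let n ≥ 2, let ζ = exp(2πi/n) ∈ ℂ, and let t ∈ ℂ with |t| = 1. Then cos(π/n) is the greatest element of the set of real roots of the derivative f_t′, and −cos(π/n) is its least element: IsGreatest {x : ℝ | (derivative f_t).eval x = 0} (cos(π/n)) and IsLeast {x : ℝ | (derivative f_t).eval x = 0} (−cos(π/n)). Geometrically, the leftmost and rightmost vertical lines through the critical points of f_t are tangent to the circle inscribed in the regular n-gon (which has radius cos(π/n)). -/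
/-!
Over the `n`-th roots of unity `ω^k`, `(z + z⁻¹) - (u + u⁻¹) = (z - u)(z - u⁻¹)/z` multiplies out
to `∏ₖ (z + z⁻¹ - (w ω^k + (w ω^k)⁻¹)) = zⁿ + z⁻ⁿ - (wⁿ + w⁻ⁿ)`. On the unit circle
`Re u = (u + u⁻¹)/2`, so taking `z = e^{iφ}` and `w = t` gives `f_t(cos φ) = 2^{1-n} (cos nφ - Re tⁿ)`,
that is `f_t = 2^{1-n} (Tₙ - Re tⁿ)`. Hence `f_t' = n 2^{1-n} U_{n-1}`, whose roots are the
`cos (kπ/n)`, `0 < k < n`, and the extreme ones are `±cos (π/n)`.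
-/
open Polynomial Finset Real

namespace IsPrimitiveRoot

theorem prod_sub_mul_pow {R : Type*} [CommRing R] [IsDomain R] {ω : R} {n : ℕ}
    (hω : IsPrimitiveRoot ω n) (hn : 0 < n) (z w : R) :
    ∏ k ∈ range n, (z - w * ω ^ k) = z ^ n - w ^ n := by
  simpa [eval_prod, mul_comm] using congrArg (eval z) (X_pow_sub_C_eq_prod hω hn rfl).symm

theorem prod_add_inv_sub_add_inv {K : Type*} [Field K] {ω : K} {n : ℕ}
    (hω : IsPrimitiveRoot ω n) (hn : 0 < n) {z w : K} (hz : z ≠ 0) (hw : w ≠ 0) :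
    ∏ k ∈ range n, (z + z⁻¹ - (w * ω ^ k + (w * ω ^ k)⁻¹)) =
      z ^ n + (z ^ n)⁻¹ - (w ^ n + (w ^ n)⁻¹) := by
  have hfactor {u : K} (hu : u ≠ 0) : z + z⁻¹ - (u + u⁻¹) = (z - u) * (z - u⁻¹) * z⁻¹ := by
    field_simp
    ring
  have hω0 : ω ≠ 0 := hω.ne_zero hn.ne'
  rw [prod_congr rfl fun k _ => hfactor (by positivity), prod_mul_distrib, prod_mul_distrib,
    prod_const, card_range, hω.prod_sub_mul_pow hn]
  simp only [mul_inv, ← inv_pow]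
  rw [hω.inv.prod_sub_mul_pow hn, inv_pow, inv_pow]
  field_simp
  ring

end IsPrimitiveRoot

theorem Complex.ofReal_re_eq_add_inv_div_two {u : ℂ} (hu : ‖u‖ = 1) :
    (u.re : ℂ) = (u + u⁻¹) / 2 := by
  rw [Complex.inv_eq_conj hu, Complex.re_eq_add_conj]

theorem IsPrimitiveRoot.prod_re_sub_re_mul_pow {ω : ℂ} {n : ℕ} (hω : IsPrimitiveRoot ω n)
    (hn : 0 < n) {z t : ℂ} (hz : ‖z‖ = 1) (ht : ‖t‖ = 1) :
    ∏ k ∈ range n, (z.re - (t * ω ^ k).re) = 2 * ((z ^ n).re - (t ^ n).re) / 2 ^ n := by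
  have hunit {u : ℂ} (hu : ‖u‖ = 1) : u ≠ 0 := norm_ne_zero_iff.mp (by simp [hu])
  have hωk (k : ℕ) : ‖t * ω ^ k‖ = 1 := by simp [ht, hω.norm'_eq_one hn.ne']
  apply Complex.ofReal_injective
  push_cast
  simp only [Complex.ofReal_re_eq_add_inv_div_two hz,
    Complex.ofReal_re_eq_add_inv_div_two (hωk _),
    Complex.ofReal_re_eq_add_inv_div_two (by simp [hz] : ‖z ^ n‖ = 1),
    Complex.ofReal_re_eq_add_inv_div_two (by simp [ht] : ‖t ^ n‖ = 1), ← sub_div, prod_div_distrib,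
    prod_const, card_range, hω.prod_add_inv_sub_add_inv hn (hunit hz) (hunit ht)]
  ring

noncomputable def regularPolygonPoly (n : ℕ) (t : ℂ) : ℝ[X] :=
  ∏ k ∈ range n, (X - C (t * Complex.exp (2 * π * Complex.I / n) ^ k).re)

theorem regularPolygonPoly_eq_C_mul_T_sub {n : ℕ} (hn : 0 < n) {t : ℂ} (ht : ‖t‖ = 1) :
    regularPolygonPoly n t =
      C (2 / 2 ^ n) * (Chebyshev.T ℝ n - C (t ^ n).re) := by
  refine eq_of_infinite_eval_eq _ _ ((Set.Icc_infinite (by norm_num : (-1 : ℝ) < 1)).mono ?_)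
  intro x ⟨hx₁, hx₂⟩
  set z := Complex.exp (arccos x * Complex.I)
  have hzx : z.re = x := by rw [Complex.exp_ofReal_mul_I_re, cos_arccos hx₁ hx₂]
  have hzn : (z ^ n).re = (Chebyshev.T ℝ n).eval x := by
    have hT := Chebyshev.T_real_cos (arccos x) n
    rw [cos_arccos hx₁ hx₂, Int.cast_natCast] at hT
    rw [hT, ← Complex.exp_nat_mul, ← mul_assoc, ← Complex.ofReal_natCast, ← Complex.ofReal_mul,
      Complex.exp_ofReal_mul_I_re]
  simp only [Set.mem_ofPred_eq, regularPolygonPoly, eval_prod, eval_sub, eval_X, eval_C, eval_mul]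
  rw [← hzx, (Complex.isPrimitiveRoot_exp n hn.ne').prod_re_sub_re_mul_pow hn
    (Complex.norm_exp_ofReal_mul_I _) ht, hzn, hzx]
  ring

theorem derivative_regularPolygonPoly (m : ℕ) {t : ℂ} (ht : ‖t‖ = 1) :
    derivative (regularPolygonPoly (m + 1) t) =
      C (2 * (m + 1) / 2 ^ (m + 1) : ℝ) * Chebyshev.U ℝ m := by
  rw [regularPolygonPoly_eq_C_mul_T_sub m.succ_pos ht, derivative_C_mul, derivative_sub,
    derivative_C, sub_zero, Chebyshev.T_derivative_eq_U]
  push_cast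
  rw [add_sub_cancel_right, ← mul_assoc, mul_div_right_comm, C_mul, map_add, map_natCast, map_one, Nat.succ_eq_add_one]

theorem Polynomial.Chebyshev.eval_U_real_eq_zero_iff (m : ℕ) (x : ℝ) :
    (U ℝ m).eval x = 0 ↔ ∃ k < m, cos ((k + 1) * π / (m + 1)) = x := by
  have hU : U ℝ m ≠ 0 := fun h => by
    simpa [h] using (leadingCoeff_U_natCast ℝ m).symm
  rw [← IsRoot.def, ← mem_roots hU, roots_U_real]
  simp

theorem setOf_eval_derivative_regularPolygonPoly_eq_zero (m : ℕ) {t : ℂ} (ht : ‖t‖ = 1) :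
    {x : ℝ | (derivative (regularPolygonPoly (m + 1) t)).eval x = 0} =
      (fun k : ℕ => cos ((k + 1) * π / (m + 1))) '' Set.Iio m := by
  rw [derivative_regularPolygonPoly m ht]
  ext x
  simp [Chebyshev.eval_U_real_eq_zero_iff, Nat.cast_add_one_ne_zero]

theorem add_one_mul_pi_div_le_pi {k m : ℕ} (hk : k ≤ m) : ((k : ℝ) + 1) * π / (m + 1) ≤ π := by
  rw [div_le_iff₀ (by positivity), mul_comm]
  gcongr

theorem isGreatest_image_cos_mul_pi_div (m : ℕ) (hm : 1 ≤ m) :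
    IsGreatest ((fun k : ℕ => cos ((k + 1) * π / (m + 1))) '' Set.Iio m) (cos (π / (m + 1))) := by
  refine ⟨⟨0, hm, by simp⟩, ?_⟩
  rintro _ ⟨k, hk, rfl⟩
  apply cos_le_cos_of_nonneg_of_le_pi (by positivity) (add_one_mul_pi_div_le_pi hk.le)
  gcongr
  exact le_mul_of_one_le_left pi_pos.le (le_add_of_nonneg_left k.cast_nonneg)

theorem isLeast_image_cos_mul_pi_div (m : ℕ) (hm : 1 ≤ m) :
    IsLeast ((fun k : ℕ => cos ((k + 1) * π / (m + 1))) '' Set.Iio m) (-cos (π / (m + 1))) := by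
  obtain ⟨j, rfl⟩ : ∃ j, m = j + 1 := ⟨m - 1, by omega⟩
  push_cast
  have hlast : cos ((j + 1) * π / (j + 1 + 1)) = -cos (π / (j + 1 + 1)) := by
    rw [← cos_pi_sub]
    congr 1
    field_simp
    ring
  refine ⟨⟨j, by simp, hlast⟩, ?_⟩
  rintro _ ⟨k, hk, rfl⟩
  rw [← hlast]
  have hkj : k ≤ j := Nat.lt_succ_iff.mp hk
  apply cos_le_cos_of_nonneg_of_le_pi (by positivity)
    (by exact_mod_cast add_one_mul_pi_div_le_pi j.le_succ)
  gcongr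

/-- `cos (π/n)` is the greatest real root of `f_t'` and `-cos (π/n)` is the least:
the extreme vertical lines through the critical points of `f_t` are tangent to
the inscribed circle of the regular `n`-gon. -/
theorem extreme_critical_points (n : ℕ) (hn : 2 ≤ n)
    (ζ : ℂ) (hζ : ζ = Complex.exp (2 * Real.pi * Complex.I / n))
    (t : ℂ) (ht : ‖t‖ = 1) :
    IsGreatest {x : ℝ |
        (derivative (∏ k ∈ Finset.range n, (X - C (Complex.re (t * ζ ^ k))))).eval x = 0}
      (Real.cos (Real.pi / n)) ∧
    IsLeast {x : ℝ |
        (derivative (∏ k ∈ Finset.range n, (X - C (Complex.re (t * ζ ^ k))))).eval x = 0}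
      (-Real.cos (Real.pi / n)) := by
  obtain ⟨m, rfl⟩ : ∃ m, n = m + 1 := ⟨n - 1, by omega⟩
  subst hζ
  have hcrit := setOf_eval_derivative_regularPolygonPoly_eq_zero m ht
  unfold regularPolygonPoly at hcrit
  rw [hcrit, Nat.cast_add_one]
  exact ⟨isGreatest_image_cos_mul_pi_div m (by omega), isLeast_image_cos_mul_pi_div m (by omega)⟩
end
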